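/- arXiv:2007.07594 — 5 statements merged into one kernel-verified Lean document; each statement's English description precedes it below -/
import Mathlib

section
/- Let a > 0, T > 0 and φ : [0,T] → ℝ a smooth function satisfying φ'(t) ≥ a·φ(t)² for all t ∈ [0,T], with antiderivative Φ. Then −(1/a)·log(1 − a T φ(0)) ≤ Φ(T) − Φ(0) ≤ (1/a)·log(1 + a T φ(T)). -/
theorem stmt_2 (a T : ℝ) (ha : 0 < a) (hT : 0 < T)
    (φ φ' Φ : ℝ → ℝ)
    (hφ : ∀ t ∈ Set.Icc (0:ℝ) T, HasDerivAt φ (φ' t) t)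
    (hφ'cont : ContinuousOn φ' (Set.Icc 0 T))
    (hineq : ∀ t ∈ Set.Icc (0:ℝ) T, a * (φ t) ^ 2 ≤ φ' t)
    (hΦ : ∀ t ∈ Set.Icc (0:ℝ) T, HasDerivAt Φ (φ t) t) :
    -(1 / a) * Real.log (1 - a * T * φ 0) ≤ Φ T - Φ 0 ∧
      Φ T - Φ 0 ≤ (1 / a) * Real.log (1 + a * T * φ T) := by
  set u : ℝ → ℝ := fun t => Real.exp (-a * Φ t) with hu_def
  set v : ℝ → ℝ := fun t => -a * φ t * Real.exp (-a * Φ t) with hv_def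
  set v' : ℝ → ℝ := fun t =>
    (-a * φ' t) * Real.exp (-a * Φ t) +
      (-a * φ t) * (-a * φ t * Real.exp (-a * Φ t)) with hv'_def
  have hu : ∀ t ∈ Set.Icc (0:ℝ) T, HasDerivAt u (v t) t := by
    intro t ht
    have h := (((hΦ t ht).const_mul (-a)).exp)
    convert h using 1
    simp [hv_def]; ring
  have hv : ∀ t ∈ Set.Icc (0:ℝ) T, HasDerivAt v (v' t) t := by
    intro t ht
    have h1 : HasDerivAt (fun t => -a * φ t) (-a * φ' t) t := (hφ t ht).const_mul (-a)
    exact h1.mul (hu t ht)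
  have hv'le : ∀ t ∈ Set.Icc (0:ℝ) T, v' t ≤ 0 := by
    intro t ht
    have hE : 0 < Real.exp (-a * Φ t) := Real.exp_pos _
    have h := hineq t ht
    have heq : v' t = a * Real.exp (-a * Φ t) * (a * φ t ^ 2 - φ' t) := by
      simp [hv'_def]; ring
    rw [heq]
    have : a * φ t ^ 2 - φ' t ≤ 0 := by linarith
    exact mul_nonpos_of_nonneg_of_nonpos (by positivity) this
  have hvcont : ContinuousOn v (Set.Icc 0 T) :=
    fun t ht => (hv t ht).continuousAt.continuousWithinAt
  have hvanti : AntitoneOn v (Set.Icc 0 T) := by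
    apply antitoneOn_of_deriv_nonpos (convex_Icc 0 T) hvcont
    · intro x hx
      rw [interior_Icc] at hx
      exact (hv x (Set.Ioo_subset_Icc_self hx)).differentiableAt.differentiableWithinAt
    · intro x hx
      rw [interior_Icc] at hx
      have hx' : x ∈ Set.Icc (0:ℝ) T := Set.Ioo_subset_Icc_self hx
      rw [(hv x hx').deriv]
      exact hv'le x hx'
  have hInt : IntervalIntegrable v MeasureTheory.volume 0 T := by
    apply ContinuousOn.intervalIntegrable
    rwa [Set.uIcc_of_le hT.le]
  have hEq : ∫ t in (0:ℝ)..T, v t = u T - u 0 := by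
    apply intervalIntegral.integral_eq_sub_of_hasDerivAt
    · intro t ht
      rw [Set.uIcc_of_le hT.le] at ht
      exact hu t ht
    · exact hInt
  have h0T : (0:ℝ) ∈ Set.Icc (0:ℝ) T := Set.left_mem_Icc.mpr hT.le
  have hTT : T ∈ Set.Icc (0:ℝ) T := Set.right_mem_Icc.mpr hT.le
  have hIub : u T - u 0 ≤ T * v 0 := by
    rw [← hEq]
    have h := intervalIntegral.integral_mono_on (μ := MeasureTheory.volume)
      (f := v) (g := fun _ => v 0) hT.le hInt intervalIntegrable_const
      (fun x hx => hvanti h0T hx hx.1)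
    rwa [intervalIntegral.integral_const, smul_eq_mul, sub_zero] at h
  have hIlb : T * v T ≤ u T - u 0 := by
    rw [← hEq]
    have h := intervalIntegral.integral_mono_on (μ := MeasureTheory.volume)
      (f := fun _ => v T) (g := v) hT.le intervalIntegrable_const hInt
      (fun x hx => hvanti hx hTT hx.2)
    rwa [intervalIntegral.integral_const, smul_eq_mul, sub_zero] at h
  have hE0 : 0 < Real.exp (-a * Φ 0) := Real.exp_pos _
  have hET : 0 < Real.exp (-a * Φ T) := Real.exp_pos _
  constructor
  · have h1 : Real.exp (-a * Φ T) - Real.exp (-a * Φ 0) ≤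
        T * (-a * φ 0 * Real.exp (-a * Φ 0)) := hIub
    have key : Real.exp (-a * Φ T) ≤ Real.exp (-a * Φ 0) * (1 - a * T * φ 0) := by
      nlinarith
    have hpos : 0 < 1 - a * T * φ 0 := by
      by_contra h
      push_neg at h
      nlinarith
    have hlog := Real.log_le_log hET key
    rw [Real.log_exp, Real.log_mul (ne_of_gt hE0) (ne_of_gt hpos), Real.log_exp] at hlog
    have h2 : -Real.log (1 - a * T * φ 0) ≤ a * (Φ T - Φ 0) := by linarith
    calc -(1 / a) * Real.log (1 - a * T * φ 0)
        = (-Real.log (1 - a * T * φ 0)) / a := by ring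
      _ ≤ (a * (Φ T - Φ 0)) / a := by gcongr
      _ = Φ T - Φ 0 := by field_simp
  · have h1 : T * (-a * φ T * Real.exp (-a * Φ T)) ≤
        Real.exp (-a * Φ T) - Real.exp (-a * Φ 0) := hIlb
    have key : Real.exp (-a * Φ 0) ≤ Real.exp (-a * Φ T) * (1 + a * T * φ T) := by
      nlinarith
    have hpos : 0 < 1 + a * T * φ T := by
      by_contra h
      push_neg at h
      nlinarith
    have hlog := Real.log_le_log hE0 key
    rw [Real.log_exp, Real.log_mul (ne_of_gt hET) (ne_of_gt hpos), Real.log_exp] at hlog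
    have h2 : a * (Φ T - Φ 0) ≤ Real.log (1 + a * T * φ T) := by linarith
    calc Φ T - Φ 0 = (a * (Φ T - Φ 0)) / a := by field_simp
      _ ≤ Real.log (1 + a * T * φ T) / a := by gcongr
      _ = (1 / a) * Real.log (1 + a * T * φ T) := by ring
end

section
/- Let F : ℝⁿ → ℝ be twice differentiable with Hessian F'' ≥ ρ·Id for some ρ > 0, and let X : [0,T] → ℝⁿ satisfy Newton's equation Ẍ_t = F''(X_t)F'(X_t). Define φ_t = F'(X_t) + Ẋ_t. Then for all 0 ≤ t ≤ s ≤ T, |φ_s|² ≥ exp(2ρ(s−t))·|φ_t|². -/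
/-!
Along a solution of Newton's equation, `φ = F'(X) + Ẋ` solves the linear equation
`φ̇ = F''(X) φ`, so `d/dt |φ|² = 2⟪F''(X) φ, φ⟫ ≥ 2ρ |φ|²` by convexity. Hence
`e^{-2ρt} |φ_t|²` is nondecreasing, which is the claimed exponential growth.
-/

open Set

theorem exp_mul_sub_mul_le_of_mul_le_deriv {f f' : ℝ → ℝ} {c t s : ℝ} (hts : t ≤ s)
    (hf : ContinuousOn f (Icc t s)) (hf' : ∀ u ∈ Ioo t s, HasDerivAt f (f' u) u)
    (hc : ∀ u ∈ Ioo t s, c * f u ≤ f' u) :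
    Real.exp (c * (s - t)) * f t ≤ f s := by
  have hexp : ∀ u, HasDerivAt (fun u => Real.exp (-c * u)) (Real.exp (-c * u) * -c) u := fun u => by
    simpa using ((hasDerivAt_id u).const_mul (-c)).exp
  have hmono : MonotoneOn (fun u => Real.exp (-c * u) * f u) (Icc t s) := by
    refine monotoneOn_of_hasDerivWithinAt_nonneg (convex_Icc t s)
      ((Continuous.continuousOn (by fun_prop)).mul hf) (fun u hu => ?_) (fun u hu => ?_)
      (f' := fun u => Real.exp (-c * u) * -c * f u + Real.exp (-c * u) * f' u)
    · rw [interior_Icc] at hu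
      exact ((hexp u).mul (hf' u hu)).hasDerivWithinAt
    · rw [interior_Icc] at hu
      have := hc u hu
      have := Real.exp_pos (-c * u)
      nlinarith
  have key := hmono (left_mem_Icc.2 hts) (right_mem_Icc.2 hts) hts
  calc Real.exp (c * (s - t)) * f t
      = Real.exp (c * s) * (Real.exp (-c * t) * f t) := by
        rw [← mul_assoc, ← Real.exp_add]; ring_nf
    _ ≤ Real.exp (c * s) * (Real.exp (-c * s) * f s) := by gcongr
    _ = f s := by rw [← mul_assoc, ← Real.exp_add]; simp

theorem stmt_3_general (n : ℕ) (ρ T : ℝ)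
    (F' : EuclideanSpace ℝ (Fin n) → EuclideanSpace ℝ (Fin n))
    (F'' : EuclideanSpace ℝ (Fin n) → EuclideanSpace ℝ (Fin n) →L[ℝ] EuclideanSpace ℝ (Fin n))
    (hhess : ∀ x, HasFDerivAt F' (F'' x) x)
    (hconv : ∀ x v, ρ * ‖v‖ ^ 2 ≤ (inner ℝ (F'' x v) v : ℝ))
    (X X' : ℝ → EuclideanSpace ℝ (Fin n))
    (hX : ∀ t ∈ Set.Icc (0:ℝ) T, HasDerivAt X (X' t) t)
    (hNewton : ∀ t ∈ Set.Icc (0:ℝ) T, HasDerivAt X' (F'' (X t) (F' (X t))) t) :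
    ∀ t s, 0 ≤ t → t ≤ s → s ≤ T →
      Real.exp (2 * ρ * (s - t)) * ‖F' (X t) + X' t‖ ^ 2 ≤ ‖F' (X s) + X' s‖ ^ 2 := by
  intro t s ht hts hsT
  set φ : ℝ → EuclideanSpace ℝ (Fin n) := fun u => F' (X u) + X' u
  have hφ : ∀ u ∈ Icc t s, HasDerivAt φ (F'' (X u) (φ u)) u := fun u hu => by
    have hu' : u ∈ Icc 0 T := ⟨ht.trans hu.1, hu.2.trans hsT⟩
    have h := ((hhess (X u)).comp_hasDerivAt u (hX u hu')).add (hNewton u hu')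
    rwa [← map_add, add_comm (X' u)] at h
  refine exp_mul_sub_mul_le_of_mul_le_deriv (f := (‖φ ·‖ ^ 2)) hts
    (fun u hu => (hφ u hu).norm_sq.continuousAt.continuousWithinAt)
    (fun u hu => (hφ u (Ioo_subset_Icc_self hu)).norm_sq) (fun u _ => ?_)
  rw [real_inner_comm]
  linarith [hconv (X u) (φ u)]

theorem stmt_3 (n : ℕ) (ρ T : ℝ) (hρ : 0 < ρ) (hT : 0 < T)
    (F : EuclideanSpace ℝ (Fin n) → ℝ)
    (F' : EuclideanSpace ℝ (Fin n) → EuclideanSpace ℝ (Fin n))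
    (F'' : EuclideanSpace ℝ (Fin n) → EuclideanSpace ℝ (Fin n) →L[ℝ] EuclideanSpace ℝ (Fin n))
    (hgrad : ∀ x, HasGradientAt F (F' x) x)
    (hhess : ∀ x, HasFDerivAt F' (F'' x) x)
    (hconv : ∀ x v, ρ * ‖v‖ ^ 2 ≤ (inner ℝ (F'' x v) v : ℝ))
    (X X' : ℝ → EuclideanSpace ℝ (Fin n))
    (hX : ∀ t ∈ Set.Icc (0:ℝ) T, HasDerivAt X (X' t) t)
    (hNewton : ∀ t ∈ Set.Icc (0:ℝ) T, HasDerivAt X' (F'' (X t) (F' (X t))) t) :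
    ∀ t s, 0 ≤ t → t ≤ s → s ≤ T →
      Real.exp (2 * ρ * (s - t)) * ‖F' (X t) + X' t‖ ^ 2 ≤ ‖F' (X s) + X' s‖ ^ 2 :=
  stmt_3_general n ρ T F' F'' hhess hconv X X' hX hNewton
end

section
/- For F(x) = |x|²/2 on ℝⁿ and the F-interpolation X_t = e^{−t}α_T + e^{−(T−t)}β_T between x and y (with α_T = (x − y e^{−T})/(1 − e^{−2T}), β_T = (y − x e^{−T})/(1 − e^{−2T})), the conserved quantity E_T(x,y) = |Ẋ_t|² − |X_t|² equals −4e^{−T}⟨α_T, β_T⟩ for every t ∈ [0,T]. -/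
/-! `X_t` is a sum `a + b` of a decaying and a growing mode and `Ẋ_t = -a + b`, so
`|Ẋ_t|² - |X_t|² = -4⟨a, b⟩`; the weights `e^{-t}` and `e^{-(T-t)}` multiply to `e^{-T}`,
which makes the quantity independent of `t`. -/

theorem norm_neg_add_sq_sub_norm_add_sq_real {E : Type*} [NormedAddCommGroup E]
    [InnerProductSpace ℝ E] (a b : E) :
    ‖-a + b‖ ^ 2 - ‖a + b‖ ^ 2 = -4 * inner ℝ a b := by
  rw [neg_add_eq_sub, norm_sub_sq_real, norm_add_sq_real, real_inner_comm]
  ring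

theorem stmt_8_general (n : ℕ) (T : ℝ)
    (α β : EuclideanSpace ℝ (Fin n))
    (X X' : ℝ → EuclideanSpace ℝ (Fin n))
    (hX : X = fun t => Real.exp (-t) • α + Real.exp (-(T - t)) • β)
    (hX' : X' = fun t => -(Real.exp (-t) • α) + Real.exp (-(T - t)) • β) :
    ∀ t ∈ Set.Icc (0:ℝ) T,
      ‖X' t‖ ^ 2 - ‖X t‖ ^ 2 = -4 * Real.exp (-T) * (inner ℝ α β : ℝ) := by
  intro t _
  subst hX hX'
  have hweights : Real.exp (-t) * Real.exp (-(T - t)) = Real.exp (-T) := by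
    rw [← Real.exp_add]
    ring_nf
  rw [norm_neg_add_sq_sub_norm_add_sq_real, real_inner_smul_left, real_inner_smul_right,
    ← hweights]
  ring

/-- For `F(x) = |x|²/2`, the conserved quantity of the `F`-interpolation
`X_t = e^{-t} α_T + e^{-(T-t)} β_T` equals `-4 e^{-T} ⟨α_T, β_T⟩`. -/
theorem stmt_8 (n : ℕ) (x y : EuclideanSpace ℝ (Fin n)) (T : ℝ) (hT : 0 < T)
    (α β : EuclideanSpace ℝ (Fin n))
    (hα : α = (1 - Real.exp (-2 * T))⁻¹ • (x - Real.exp (-T) • y))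
    (hβ : β = (1 - Real.exp (-2 * T))⁻¹ • (y - Real.exp (-T) • x))
    (X X' : ℝ → EuclideanSpace ℝ (Fin n))
    (hX : X = fun t => Real.exp (-t) • α + Real.exp (-(T - t)) • β)
    (hX' : X' = fun t => -(Real.exp (-t) • α) + Real.exp (-(T - t)) • β) :
    ∀ t ∈ Set.Icc (0:ℝ) T,
      ‖X' t‖ ^ 2 - ‖X t‖ ^ 2 = -4 * Real.exp (-T) * (inner ℝ α β : ℝ) :=
  stmt_8_general n T α β X X' hX hX'
end

section
/- Let F : ℝⁿ → ℝ be C² and X : [0,T] → ℝⁿ a solution of Ẍ_t = F''(X_t)F'(X_t) with positive semidefinite F''. Define φ_t = Ẋ_t + F'(X_t). Then t ↦ |φ_t|² is non-decreasing on [0,T], and for all t ∈ (0,T), (T−t)|φ_t|² ≤ C_T + 2F(X_T) − 2F(X_0), where C_T = ∫₀ᵀ (|Ẋ_s|² + |F'(X_s)|²) ds. -/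
/-!
Along the flow, `φ̇_t = F''(X_t) φ_t`, so `d/dt |φ_t|² = 2 ⟪F''(X_t) φ_t, φ_t⟫ ≥ 0` by convexity
of `F`. Expanding the square, `|φ_s|² = |Ẋ_s|² + |F'(X_s)|² + 2 d/ds F(X_s)`, hence
`∫₀ᵀ |φ_s|² ds = C_T + 2F(X_T) - 2F(X_0)`, and this integral dominates `(T - t)|φ_t|²` because
`|φ|²` is non-negative and non-decreasing.
-/

open Set intervalIntegral MeasureTheory
open scoped RealInnerProductSpace

variable {E : Type*} [NormedAddCommGroup E] [InnerProductSpace ℝ E]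

theorem HasGradientAt.comp_hasDerivAt [CompleteSpace E] {f : E → ℝ} {f' : E} {γ : ℝ → E}
    {γ' : E} {t : ℝ} (hf : HasGradientAt f f' (γ t)) (hγ : HasDerivAt γ γ' t) :
    HasDerivAt (fun s => f (γ s)) ⟪f', γ'⟫ t := by
  have h := hf.hasFDerivAt.comp_hasDerivAt t hγ
  rw [InnerProductSpace.toDual_apply_apply] at h
  exact h

theorem monotoneOn_norm_sq_of_inner_deriv_nonneg {D : Set ℝ} (hD : Convex ℝ D) {φ φ' : ℝ → E}
    (hφ : ∀ t ∈ D, HasDerivAt φ (φ' t) t) (hpos : ∀ t ∈ D, 0 ≤ ⟪φ' t, φ t⟫) :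
    MonotoneOn (fun t => ‖φ t‖ ^ 2) D :=
  monotoneOn_of_hasDerivWithinAt_nonneg hD
    (fun t ht => (hφ t ht).norm_sq.continuousAt.continuousWithinAt)
    (fun t ht => (hφ t (interior_subset ht)).norm_sq.hasDerivWithinAt)
    (fun t ht => by
      rw [real_inner_comm]
      exact mul_nonneg zero_le_two (hpos t (interior_subset ht)))

theorem MonotoneOn.mul_sub_le_integral {g : ℝ → ℝ} {a b t : ℝ} (hg : MonotoneOn g (Icc a b))
    (hg₀ : ∀ s ∈ Icc a b, 0 ≤ g s) (ht : t ∈ Icc a b) :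
    (b - t) * g t ≤ ∫ s in a..b, g s := by
  have hint : ∀ {c d}, c ∈ Icc a b → d ∈ Icc a b → IntervalIntegrable g volume c d :=
    fun hc hd => (hg.mono (uIcc_subset_Icc hc hd)).intervalIntegrable
  have hb : b ∈ Icc a b := ⟨ht.1.trans ht.2, le_rfl⟩
  calc (b - t) * g t = ∫ _ in t..b, g t := by simp
    _ ≤ ∫ s in t..b, g s :=
      integral_mono_on ht.2 intervalIntegrable_const (hint ht hb)
        fun s hs => hg ht ⟨ht.1.trans hs.1, hs.2⟩ hs.1
    _ ≤ ∫ s in a..b, g s :=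
      integral_mono_interval ht.1 ht.2 le_rfl
        ((ae_restrict_iff' measurableSet_Ioc).2
          (ae_of_all _ fun s hs => hg₀ s (Ioc_subset_Icc_self hs)))
        (hint ⟨le_rfl, hb.1⟩ hb)

theorem integral_norm_add_gradient_sq [CompleteSpace E] {f : E → ℝ} {f' : E → E} {γ γ' : ℝ → E}
    {a b : ℝ} (hf : ∀ x, HasGradientAt f (f' x) x) (hf' : Continuous f')
    (hγ : ∀ t ∈ uIcc a b, HasDerivAt γ (γ' t) t) (hγ' : ContinuousOn γ' (uIcc a b)) :
    ∫ s in a..b, ‖γ' s + f' (γ s)‖ ^ 2 =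
      (∫ s in a..b, (‖γ' s‖ ^ 2 + ‖f' (γ s)‖ ^ 2)) + 2 * f (γ b) - 2 * f (γ a) := by
  have hf'γ : ContinuousOn (fun s => f' (γ s)) (uIcc a b) :=
    hf'.comp_continuousOn fun t ht => (hγ t ht).continuousAt.continuousWithinAt
  have hcross : IntervalIntegrable (fun s => 2 * ⟪f' (γ s), γ' s⟫) volume a b :=
    (continuousOn_const.mul (hf'γ.inner hγ')).intervalIntegrable
  have hsq : IntervalIntegrable (fun s => ‖γ' s‖ ^ 2 + ‖f' (γ s)‖ ^ 2) volume a b :=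
    ((hγ'.norm.pow 2).add (hf'γ.norm.pow 2)).intervalIntegrable
  have hftc : ∫ s in a..b, 2 * ⟪f' (γ s), γ' s⟫ = 2 * f (γ b) - 2 * f (γ a) :=
    integral_eq_sub_of_hasDerivAt
      (fun t ht => ((hf _).comp_hasDerivAt (hγ t ht)).const_mul 2) hcross
  calc ∫ s in a..b, ‖γ' s + f' (γ s)‖ ^ 2
      = ∫ s in a..b, ((‖γ' s‖ ^ 2 + ‖f' (γ s)‖ ^ 2) + 2 * ⟪f' (γ s), γ' s⟫) :=
        integral_congr fun s _ => by rw [norm_add_sq_real, real_inner_comm]; ring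
    _ = _ := by
      rw [integral_add hsq hcross, hftc]
      ring

theorem stmt_16_general (d : ℕ) (T : ℝ)
    (F : EuclideanSpace ℝ (Fin d) → ℝ)
    (F' : EuclideanSpace ℝ (Fin d) → EuclideanSpace ℝ (Fin d))
    (F'' : EuclideanSpace ℝ (Fin d) → EuclideanSpace ℝ (Fin d) →L[ℝ] EuclideanSpace ℝ (Fin d))
    (hgrad : ∀ x, HasGradientAt F (F' x) x)
    (hhess : ∀ x, HasFDerivAt F' (F'' x) x)
    (hpos : ∀ x v, 0 ≤ (inner ℝ (F'' x v) v : ℝ))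
    (X X' : ℝ → EuclideanSpace ℝ (Fin d))
    (hX : ∀ t ∈ Set.Icc (0:ℝ) T, HasDerivAt X (X' t) t)
    (hNewton : ∀ t ∈ Set.Icc (0:ℝ) T, HasDerivAt X' (F'' (X t) (F' (X t))) t) :
    MonotoneOn (fun t => ‖X' t + F' (X t)‖ ^ 2) (Set.Icc 0 T) ∧
      ∀ t ∈ Set.Ioo (0:ℝ) T,
        (T - t) * ‖X' t + F' (X t)‖ ^ 2 ≤
          (∫ s in (0:ℝ)..T, (‖X' s‖ ^ 2 + ‖F' (X s)‖ ^ 2)) + 2 * F (X T) - 2 * F (X 0) := by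
  have hφ : ∀ t ∈ Icc (0:ℝ) T,
      HasDerivAt (fun s => X' s + F' (X s)) (F'' (X t) (X' t + F' (X t))) t := fun t ht =>
    ((hNewton t ht).add ((hhess (X t)).comp_hasDerivAt t (hX t ht))).congr_deriv
      (by rw [map_add, add_comm])
  have hmono : MonotoneOn (fun t => ‖X' t + F' (X t)‖ ^ 2) (Icc 0 T) :=
    monotoneOn_norm_sq_of_inner_deriv_nonneg (convex_Icc 0 T) hφ fun t _ => hpos _ _
  refine ⟨hmono, fun t ht => ?_⟩
  have hIcc : uIcc 0 T = Icc 0 T := uIcc_of_le (ht.1.trans ht.2).le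
  rw [← integral_norm_add_gradient_sq hgrad
    (continuous_iff_continuousAt.2 fun x => (hhess x).continuousAt) (hIcc ▸ hX)
    (hIcc ▸ fun s hs => (hNewton s hs).continuousAt.continuousWithinAt)]
  exact hmono.mul_sub_le_integral (fun s _ => sq_nonneg _) (Ioo_subset_Icc_self ht)

/-- With positive semidefinite Hessian, `t ↦ |φ_t|²` is non-decreasing along a Newton
interpolation, and `(T-t)|φ_t|² ≤ C_T + 2F(X_T) - 2F(X_0)`. -/
theorem stmt_16 (d : ℕ) (T : ℝ) (hT : 0 < T)
    (F : EuclideanSpace ℝ (Fin d) → ℝ)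
    (F' : EuclideanSpace ℝ (Fin d) → EuclideanSpace ℝ (Fin d))
    (F'' : EuclideanSpace ℝ (Fin d) → EuclideanSpace ℝ (Fin d) →L[ℝ] EuclideanSpace ℝ (Fin d))
    (hgrad : ∀ x, HasGradientAt F (F' x) x)
    (hhess : ∀ x, HasFDerivAt F' (F'' x) x)
    (hpos : ∀ x v, 0 ≤ (inner ℝ (F'' x v) v : ℝ))
    (X X' : ℝ → EuclideanSpace ℝ (Fin d))
    (hX : ∀ t ∈ Set.Icc (0:ℝ) T, HasDerivAt X (X' t) t)
    (hNewton : ∀ t ∈ Set.Icc (0:ℝ) T, HasDerivAt X' (F'' (X t) (F' (X t))) t) :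
    MonotoneOn (fun t => ‖X' t + F' (X t)‖ ^ 2) (Set.Icc 0 T) ∧
      ∀ t ∈ Set.Ioo (0:ℝ) T,
        (T - t) * ‖X' t + F' (X t)‖ ^ 2 ≤
          (∫ s in (0:ℝ)..T, (‖X' s‖ ^ 2 + ‖F' (X s)‖ ^ 2)) + 2 * F (X T) - 2 * F (X 0) :=
  stmt_16_general d T F F' F'' hgrad hhess hpos X X' hX hNewton
end

section
/- Let F : ℝⁿ → ℝ be ρ-convex (ρ > 0) and X : [0,T] → ℝⁿ a solution of Newton's equation Ẍ_t = F''(X_t)F'(X_t) with X_0 = x, X_T = y, and S_t(x) the gradient flow of F starting at x. If |φ_t| ≤ g(t) for an integrable function g, where φ_t = Ẋ_t + F'(X_t), then |X_t − S_t(x)| ≤ ∫₀ᵗ g(s) ds for all t ∈ [0,T]. -/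
/-!
Put `v = X - S(x)`. Then `v̇ = φ - (F'(X) - F'(S(x)))`, and since a positive semidefinite Hessian
makes `F'` monotone, `⟪v̇, v⟫ ≤ ⟪φ, v⟫ ≤ g |v|`. Formally `d|v|/dt ≤ g`, and `v(0) = 0`; to avoid
the non-differentiability of `|v|` at `0` one integrates instead the derivative of
`√(|v|² + ε²)`, which is at most `g`, and lets `ε → 0`.
-/

open Set MeasureTheory

variable {E : Type*} [NormedAddCommGroup E] [InnerProductSpace ℝ E]

theorem inner_sub_sub_nonneg_of_hasFDerivAt {f : E → E} {f' : E → E →L[ℝ] E}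
    (hf : ∀ x, HasFDerivAt f (f' x) x) (hpos : ∀ x v, 0 ≤ (inner ℝ (f' x v) v : ℝ)) (a b : E) :
    0 ≤ (inner ℝ (f a - f b) (a - b) : ℝ) := by
  set v := a - b
  have hderiv : ∀ τ : ℝ, HasDerivAt (fun τ : ℝ => (inner ℝ (f (b + τ • v)) v : ℝ))
      (inner ℝ (f' (b + τ • v) v) v) τ := by
    intro τ
    have hline : HasDerivAt (fun τ : ℝ => b + τ • v) v τ := by
      simpa using ((hasDerivAt_id τ).smul_const v).const_add b
    simpa using ((hf _).comp_hasDerivAt τ hline).inner ℝ (hasDerivAt_const τ v)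
  have hmono : Monotone (fun τ : ℝ => (inner ℝ (f (b + τ • v)) v : ℝ)) :=
    monotone_of_deriv_nonneg (fun τ => (hderiv τ).differentiableAt)
      (fun τ => (hderiv τ).deriv ▸ hpos _ _)
  have h01 := hmono zero_le_one
  simp only [zero_smul, add_zero, one_smul, v, add_sub_cancel] at h01
  rw [inner_sub_left]
  linarith

theorem sqrt_norm_sq_add_sq_sub_le_integral {v v' : ℝ → E} {g : ℝ → ℝ} {a b ε : ℝ}
    (hab : a ≤ b) (hε : 0 < ε) (hv : ∀ s ∈ Icc a b, HasDerivAt v (v' s) s)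
    (hg_int : IntegrableOn g (Icc a b)) (hg_nonneg : ∀ s ∈ Icc a b, 0 ≤ g s)
    (hvg : ∀ s ∈ Icc a b, (inner ℝ (v' s) (v s) : ℝ) ≤ g s * ‖v s‖) :
    √(‖v b‖ ^ 2 + ε ^ 2) - √(‖v a‖ ^ 2 + ε ^ 2) ≤ ∫ s in a..b, g s := by
  set h : ℝ → ℝ := fun s => √(‖v s‖ ^ 2 + ε ^ 2)
  have hpos : ∀ s, 0 < ‖v s‖ ^ 2 + ε ^ 2 := fun s => by positivity
  have hh : ∀ s ∈ Icc a b,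
      HasDerivAt h (2 * (inner ℝ (v s) (v' s) : ℝ) / (2 * h s)) s := fun s hs =>
    ((hv s hs).norm_sq.add_const _).sqrt (hpos s).ne'
  refine intervalIntegral.sub_le_integral_of_hasDeriv_right_of_le hab
    (fun s hs => (hh s hs).continuousAt.continuousWithinAt)
    (fun s hs => (hh s (Ioo_subset_Icc_self hs)).hasDerivWithinAt) hg_int fun s hs => ?_
  have hs := Ioo_subset_Icc_self hs
  have hh_pos : 0 < h s := Real.sqrt_pos.mpr (hpos s)
  have hnorm_le : ‖v s‖ ≤ h s :=
    Real.le_sqrt_of_sq_le (le_add_of_nonneg_right (sq_nonneg ε))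
  rw [real_inner_comm, div_le_iff₀ (by positivity)]
  nlinarith [hvg s hs, mul_le_mul_of_nonneg_left hnorm_le (hg_nonneg s hs)]

theorem norm_le_add_integral_of_inner_deriv_le {v v' : ℝ → E} {g : ℝ → ℝ} {a b : ℝ}
    (hab : a ≤ b) (hv : ∀ s ∈ Icc a b, HasDerivAt v (v' s) s)
    (hg_int : IntegrableOn g (Icc a b)) (hg_nonneg : ∀ s ∈ Icc a b, 0 ≤ g s)
    (hvg : ∀ s ∈ Icc a b, (inner ℝ (v' s) (v s) : ℝ) ≤ g s * ‖v s‖) :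
    ‖v b‖ ≤ ‖v a‖ + ∫ s in a..b, g s := by
  refine le_of_forall_pos_le_add fun ε hε => ?_
  have hreg := sqrt_norm_sq_add_sq_sub_le_integral hab hε hv hg_int hg_nonneg hvg
  have hb : ‖v b‖ ≤ √(‖v b‖ ^ 2 + ε ^ 2) :=
    Real.le_sqrt_of_sq_le (le_add_of_nonneg_right (sq_nonneg ε))
  have ha : √(‖v a‖ ^ 2 + ε ^ 2) ≤ ‖v a‖ + ε :=
    Real.sqrt_le_iff.mpr ⟨by positivity, by nlinarith [norm_nonneg (v a)]⟩
  linarith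

theorem stmt_17_general (d : ℕ) (ρ T : ℝ) (hρ : 0 < ρ)
    (F' : EuclideanSpace ℝ (Fin d) → EuclideanSpace ℝ (Fin d))
    (F'' : EuclideanSpace ℝ (Fin d) → EuclideanSpace ℝ (Fin d) →L[ℝ] EuclideanSpace ℝ (Fin d))
    (hhess : ∀ x, HasFDerivAt F' (F'' x) x)
    (hconv : ∀ x v, ρ * ‖v‖ ^ 2 ≤ (inner ℝ (F'' x v) v : ℝ))
    (x : EuclideanSpace ℝ (Fin d))
    (X X' : ℝ → EuclideanSpace ℝ (Fin d))
    (hX0 : X 0 = x)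
    (hX : ∀ t ∈ Set.Icc (0:ℝ) T, HasDerivAt X (X' t) t)
    (S : ℝ → EuclideanSpace ℝ (Fin d))
    (hS0 : S 0 = x)
    (hS : ∀ t ∈ Set.Icc (0:ℝ) T, HasDerivAt S (-F' (S t)) t)
    (g : ℝ → ℝ)
    (hg_int : IntervalIntegrable g MeasureTheory.volume 0 T)
    (hg : ∀ t ∈ Set.Icc (0:ℝ) T, ‖X' t + F' (X t)‖ ≤ g t) :
    ∀ t ∈ Set.Icc (0:ℝ) T, ‖X t - S t‖ ≤ ∫ s in (0:ℝ)..t, g s := by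
  intro t ⟨ht0, htT⟩
  have hsub : Icc 0 t ⊆ Icc 0 T := Icc_subset_Icc_right htT
  have hF'_mono : ∀ a b, 0 ≤ (inner ℝ (F' a - F' b) (a - b) : ℝ) :=
    inner_sub_sub_nonneg_of_hasFDerivAt hhess fun x v =>
      (mul_nonneg hρ.le (sq_nonneg ‖v‖)).trans (hconv x v)
  have hinner : ∀ s ∈ Icc 0 t,
      (inner ℝ (X' s + F' (S s)) (X s - S s) : ℝ) ≤ g s * ‖X s - S s‖ := fun s hs =>
    calc (inner ℝ (X' s + F' (S s)) (X s - S s) : ℝ)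
        = inner ℝ (X' s + F' (X s)) (X s - S s) - inner ℝ (F' (X s) - F' (S s)) (X s - S s) := by
          rw [← inner_sub_left]; congr 1; abel
      _ ≤ inner ℝ (X' s + F' (X s)) (X s - S s) := sub_le_self _ (hF'_mono _ _)
      _ ≤ ‖X' s + F' (X s)‖ * ‖X s - S s‖ := real_inner_le_norm _ _
      _ ≤ g s * ‖X s - S s‖ := by gcongr; exact hg s (hsub hs)
  simpa [hX0, hS0] using norm_le_add_integral_of_inner_deriv_le ht0
    (fun s hs => sub_neg_eq_add (X' s) _ ▸ (hX s (hsub hs)).sub (hS s (hsub hs)))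
    (((intervalIntegrable_iff_integrableOn_Icc_of_le (ht0.trans htT)).mp hg_int).mono_set hsub)
    (fun s hs => (norm_nonneg _).trans (hg s (hsub hs))) hinner

/-- If `|φ_t| ≤ g(t)` with `g` integrable, then under `ρ`-convexity the Newton
interpolation stays within `∫₀ᵗ g` of the gradient flow started at the same point. -/
theorem stmt_17 (d : ℕ) (ρ T : ℝ) (hρ : 0 < ρ) (hT : 0 < T)
    (F : EuclideanSpace ℝ (Fin d) → ℝ)
    (F' : EuclideanSpace ℝ (Fin d) → EuclideanSpace ℝ (Fin d))
    (F'' : EuclideanSpace ℝ (Fin d) → EuclideanSpace ℝ (Fin d) →L[ℝ] EuclideanSpace ℝ (Fin d))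
    (hgrad : ∀ x, HasGradientAt F (F' x) x)
    (hhess : ∀ x, HasFDerivAt F' (F'' x) x)
    (hconv : ∀ x v, ρ * ‖v‖ ^ 2 ≤ (inner ℝ (F'' x v) v : ℝ))
    (x y : EuclideanSpace ℝ (Fin d))
    (X X' : ℝ → EuclideanSpace ℝ (Fin d))
    (hX0 : X 0 = x) (hXT : X T = y)
    (hX : ∀ t ∈ Set.Icc (0:ℝ) T, HasDerivAt X (X' t) t)
    (hNewton : ∀ t ∈ Set.Icc (0:ℝ) T, HasDerivAt X' (F'' (X t) (F' (X t))) t)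
    (S : ℝ → EuclideanSpace ℝ (Fin d))
    (hS0 : S 0 = x)
    (hS : ∀ t ∈ Set.Icc (0:ℝ) T, HasDerivAt S (-F' (S t)) t)
    (g : ℝ → ℝ)
    (hg_int : IntervalIntegrable g MeasureTheory.volume 0 T)
    (hg : ∀ t ∈ Set.Icc (0:ℝ) T, ‖X' t + F' (X t)‖ ≤ g t) :
    ∀ t ∈ Set.Icc (0:ℝ) T, ‖X t - S t‖ ≤ ∫ s in (0:ℝ)..t, g s :=
  stmt_17_general d ρ T hρ F' F'' hhess hconv x X X' hX0 hX S hS0 hS g hg_int hg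
end
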